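/- arXiv:1008.2386 — 6 statements merged into one kernel-verified Lean document; each statement's English description precedes it below -/
import Mathlib

section
/- Let X be an n×n complex Hermitian positive semidefinite matrix. Then det(I_n + X) is a real number at least 1, the trace of X is a nonnegative real number, and log(det(I_n + X)) ≤ tr(X) (taking real parts, which equal the quantities themselves). Moreover, equality log(det(I_n + X)) = tr(X) holds if and only if X = 0. -/
open Matrix
open scoped ComplexOrder

/-!
Diagonalise `X = U diag(λ) Uᴴ` with `λᵢ ≥ 0`. Then `det (1 + X) = ∏ (1 + λᵢ)` and `tr X = ∑ λᵢ`,
so the claim reduces to the scalar inequality `log (1 + t) ≤ t` for `t ≥ 0`, applied termwise;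
it is strict unless `t = 0`, so equality forces every eigenvalue, hence `X`, to vanish.
-/

namespace Real

theorem log_one_add_le_self {x : ℝ} (hx : -1 < x) : log (1 + x) ≤ x := by
  linarith [log_le_sub_one_of_pos (by linarith : 0 < 1 + x)]

theorem log_one_add_eq_self_iff {x : ℝ} (hx : -1 < x) : log (1 + x) = x ↔ x = 0 := by
  refine ⟨fun h => ?_, fun h => by simp [h]⟩
  by_contra hne
  linarith [log_lt_sub_one_of_pos (by linarith : 0 < 1 + x) (by simpa using hne)]

variable {ι : Type*} (s : Finset ι) {t : ι → ℝ}

theorem log_prod_one_add_le_sum (ht : ∀ i ∈ s, -1 < t i) :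
    log (∏ i ∈ s, (1 + t i)) ≤ ∑ i ∈ s, t i := by
  rw [log_prod fun i hi => by linarith [ht i hi]]
  exact Finset.sum_le_sum fun i hi => log_one_add_le_self (ht i hi)

theorem log_prod_one_add_eq_sum_iff (ht : ∀ i ∈ s, -1 < t i) :
    log (∏ i ∈ s, (1 + t i)) = ∑ i ∈ s, t i ↔ ∀ i ∈ s, t i = 0 := by
  rw [log_prod fun i hi => by linarith [ht i hi],
    Finset.sum_eq_sum_iff_of_le fun i hi => log_one_add_le_self (ht i hi)]
  exact forall₂_congr fun i hi => log_one_add_eq_self_iff (ht i hi)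

end Real

namespace Matrix.IsHermitian

variable {n 𝕜 : Type*} [Fintype n] [DecidableEq n] [RCLike 𝕜] {A : Matrix n n 𝕜}

theorem det_one_add (hA : A.IsHermitian) :
    det (1 + A) = ∏ i, (1 + (hA.eigenvalues i : 𝕜)) := by
  conv_lhs => rw [hA.spectral_theorem,
    ← map_one (Unitary.conjStarAlgAut 𝕜 _ hA.eigenvectorUnitary), ← map_add,
    Unitary.conjStarAlgAut_apply, det_mul_right_comm,
    Unitary.mul_star_self_of_mem hA.eigenvectorUnitary.2, one_mul, ← diagonal_one, diagonal_add,
    det_diagonal]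
  rfl

end Matrix.IsHermitian

/-- For an `n × n` complex Hermitian positive semidefinite matrix `X`:
`det (I + X)` is a real number at least `1`, `tr X` is a nonnegative real number,
`log (det (I + X)) ≤ tr X` (taking real parts), and equality holds iff `X = 0`. -/
theorem logdet_le_trace_of_posSemidef {n : Type*} [Fintype n] [DecidableEq n]
    (X : Matrix n n ℂ) (hX : X.PosSemidef) :
    ((1 + X).det).im = 0 ∧ 1 ≤ ((1 + X).det).re ∧
    (X.trace).im = 0 ∧ 0 ≤ (X.trace).re ∧
    Real.log ((1 + X).det).re ≤ (X.trace).re ∧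
    (Real.log ((1 + X).det).re = (X.trace).re ↔ X = 0) := by
  set μ := hX.isHermitian.eigenvalues
  have hμ : ∀ i ∈ Finset.univ, 0 ≤ μ i := fun i _ => hX.eigenvalues_nonneg i
  have hμ' : ∀ i ∈ Finset.univ, -1 < μ i := fun i hi => by linarith [hμ i hi]
  have hdet : (1 + X).det = ((∏ i, (1 + μ i) : ℝ) : ℂ) := by
    rw [hX.isHermitian.det_one_add]
    push_cast
    rfl
  have htr : X.trace = ((∑ i, μ i : ℝ) : ℂ) := by
    rw [hX.isHermitian.trace_eq_sum_eigenvalues]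
    push_cast
    rfl
  have hzero : (∀ i ∈ Finset.univ, μ i = 0) ↔ X = 0 := by
    simp [← hX.isHermitian.eigenvalues_eq_zero_iff, funext_iff, μ]
  rw [hdet, htr, Complex.ofReal_re, Complex.ofReal_re, Complex.ofReal_im, Complex.ofReal_im,
    ← hzero]
  exact ⟨rfl, Finset.one_le_prod fun i hi => by linarith [hμ i hi], rfl, Finset.sum_nonneg hμ,
    Real.log_prod_one_add_le_sum _ hμ', Real.log_prod_one_add_eq_sum_iff _ hμ'⟩
end

section
/- The log-determinant function is concave on the set of n×n complex Hermitian positive definite matrices: for all Hermitian positive definite matrices A, B and all θ ∈ [0,1], the matrix θA + (1−θ)B is Hermitian positive definite and log(det(θA + (1−θ)B)) ≥ θ·log(det A) + (1−θ)·log(det B), where det of a Hermitian positive definite matrix is a positive real number (take real parts). -/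
/-! Factor `B = T Tᴴ` and diagonalize the Hermitian matrix `T⁻¹ A T⁻¹ᴴ` unitarily: this yields one
invertible `S` with `B = S Sᴴ` and `A = S (diag d) Sᴴ`, `d > 0`. Every convex combination of `A` and
`B` is then `S (diag v) Sᴴ` with `v = θ d + (1 - θ) 1`, and `log det (S (diag v) Sᴴ)` equals
`log ‖det S‖² + ∑ log vᵢ`, so the inequality is the concavity of the scalar logarithm. -/

open Matrix
open scoped ComplexOrder

theorem Real.concaveOn_sum_log {ι : Type*} [Fintype ι] :
    ConcaveOn ℝ (Set.univ.pi fun _ : ι => Set.Ioi 0) (fun x : ι → ℝ => ∑ i, Real.log (x i)) := by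
  refine ⟨convex_pi fun _ _ => convex_Ioi 0, fun x hx y hy a b ha hb hab => ?_⟩
  simp only [smul_eq_mul, Finset.mul_sum, ← Finset.sum_add_distrib, Pi.add_apply, Pi.smul_apply]
  gcongr with i
  exact strictConcaveOn_log_Ioi.concaveOn.2 (hx i trivial) (hy i trivial) ha hb hab

namespace Matrix

variable {n 𝕜 : Type*} [RCLike 𝕜]

theorem convex_setOf_posDef : Convex ℝ {A : Matrix n n 𝕜 | A.PosDef} := by
  intro A hA B hB a b ha hb hab
  rcases ha.eq_or_lt with rfl | ha
  · rw [zero_add] at hab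
    subst hab
    simpa using hB
  · exact (hA.smul ha).add_posSemidef (hB.posSemidef.smul hb)

variable [Fintype n] [DecidableEq n]

theorem smul_mul_diagonal_mul_conjTranspose_add_smul (S : Matrix n n 𝕜) (a b : n → ℝ) (r s : ℝ) :
    r • (S * diagonal (RCLike.ofReal ∘ a) * Sᴴ) + s • (S * diagonal (RCLike.ofReal ∘ b) * Sᴴ) =
      S * diagonal (RCLike.ofReal ∘ (r • a + s • b)) * Sᴴ := by
  have hdiag : diagonal (RCLike.ofReal ∘ (r • a + s • b)) =
      r • diagonal (RCLike.ofReal ∘ a) + s • diagonal (RCLike.ofReal ∘ b : n → 𝕜) := by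
    rw [← diagonal_smul, ← diagonal_smul, diagonal_add]
    congr 1
    ext i
    simp [RCLike.real_smul_eq_coe_mul]
  rw [hdiag, Matrix.mul_add, Matrix.add_mul, Matrix.mul_smul, Matrix.smul_mul, Matrix.mul_smul,
    Matrix.smul_mul]

theorem posDef_mul_diagonal_mul_conjTranspose_iff {S : Matrix n n 𝕜} (hS : IsUnit S)
    {v : n → ℝ} : (S * diagonal (RCLike.ofReal ∘ v) * Sᴴ).PosDef ↔ ∀ i, 0 < v i := by
  rw [← star_eq_conjTranspose, hS.posDef_star_right_conjugate_iff, posDef_diagonal_iff]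
  simp only [Function.comp_apply, RCLike.ofReal_pos]

theorem re_det_mul_diagonal_mul_conjTranspose (S : Matrix n n 𝕜) (v : n → ℝ) :
    RCLike.re (S * diagonal (RCLike.ofReal ∘ v) * Sᴴ).det = ‖S.det‖ ^ 2 * ∏ i, v i := by
  rw [det_mul, det_mul, det_conjTranspose, det_diagonal, mul_right_comm, RCLike.star_def,
    RCLike.mul_conj]
  simp only [Function.comp_apply, ← RCLike.ofReal_prod]
  norm_cast

theorem log_re_det_mul_diagonal_mul_conjTranspose {S : Matrix n n 𝕜} (hS : IsUnit S)
    {v : n → ℝ} (hv : ∀ i, 0 < v i) :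
    Real.log (RCLike.re (S * diagonal (RCLike.ofReal ∘ v) * Sᴴ).det) =
      Real.log (‖S.det‖ ^ 2) + ∑ i, Real.log (v i) := by
  have hdet : ‖S.det‖ ^ 2 ≠ 0 :=
    pow_ne_zero _ (norm_ne_zero_iff.2 ((isUnit_iff_isUnit_det S).1 hS).ne_zero)
  rw [re_det_mul_diagonal_mul_conjTranspose, Real.log_mul hdet
    (Finset.prod_pos fun i _ => hv i).ne', Real.log_prod fun i _ => (hv i).ne']

open scoped MatrixOrder in
theorem PosDef.exists_simultaneous_diagonalization {A B : Matrix n n 𝕜} (hB : B.PosDef)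
    (hA : A.IsHermitian) :
    ∃ (S : Matrix n n 𝕜) (d : n → ℝ), IsUnit S ∧ B = S * Sᴴ ∧
      A = S * diagonal (RCLike.ofReal ∘ d) * Sᴴ := by
  obtain ⟨T, hBT⟩ : ∃ T : Matrix n n 𝕜, B = T * Tᴴ := by
    obtain ⟨X, hX⟩ := CStarAlgebra.nonneg_iff_eq_star_mul_self.mp hB.posSemidef.nonneg
    exact ⟨Xᴴ, by rw [hX, conjTranspose_conjTranspose, star_eq_conjTranspose]⟩
  have hT : IsUnit T.det := by
    have hdet := (isUnit_iff_isUnit_det B).1 hB.isUnit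
    rw [hBT, det_mul] at hdet
    exact isUnit_of_mul_isUnit_left hdet
  have hM : (T⁻¹ * A * T⁻¹ᴴ).IsHermitian := isHermitian_mul_mul_conjTranspose _ hA
  set U : Matrix n n 𝕜 := (hM.eigenvectorUnitary : Matrix n n 𝕜)
  have hspec : T⁻¹ * A * T⁻¹ᴴ = U * diagonal (RCLike.ofReal ∘ hM.eigenvalues) * star U :=
    hM.spectral_theorem
  set d := hM.eigenvalues
  refine ⟨T * U, d, ((isUnit_iff_isUnit_det T).2 hT).mul Unitary.isUnit_coe, ?_, ?_⟩
  · rw [conjTranspose_mul, ← Matrix.mul_assoc, Matrix.mul_assoc T, ← star_eq_conjTranspose,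
      Unitary.mul_star_self_of_mem hM.eigenvectorUnitary.2, Matrix.mul_one, hBT]
  · calc A = T * (T⁻¹ * A * T⁻¹ᴴ) * Tᴴ := by
          rw [← Matrix.mul_assoc, ← Matrix.mul_assoc, mul_nonsing_inv _ hT, Matrix.one_mul,
            Matrix.mul_assoc, ← conjTranspose_mul, mul_nonsing_inv _ hT, conjTranspose_one,
            Matrix.mul_one]
      _ = _ := by
          rw [hspec, conjTranspose_mul, star_eq_conjTranspose]
          simp only [Matrix.mul_assoc]

end Matrix

/-- Concavity of `log ∘ det` on Hermitian positive definite complex matrices: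
for PD `A`, `B` and `θ ∈ [0,1]`, the matrix `θ•A + (1-θ)•B` is Hermitian positive
definite and `log det (θ•A + (1-θ)•B) ≥ θ log det A + (1-θ) log det B`
(determinants of PD matrices are positive reals; take real parts). -/
theorem logdet_concave_posDef {n : Type*} [Fintype n] [DecidableEq n]
    (A B : Matrix n n ℂ) (hA : A.PosDef) (hB : B.PosDef)
    (θ : ℝ) (hθ0 : 0 ≤ θ) (hθ1 : θ ≤ 1) :
    (θ • A + (1 - θ) • B).PosDef ∧
    θ * Real.log A.det.re + (1 - θ) * Real.log B.det.re ≤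
      Real.log ((θ • A + (1 - θ) • B).det.re) := by
  have hC := convex_setOf_posDef hA hB hθ0 (sub_nonneg.2 hθ1) (add_sub_cancel θ 1)
  refine ⟨hC, ?_⟩
  obtain ⟨S, d, hS, rfl, rfl⟩ := hB.exists_simultaneous_diagonalization hA.isHermitian
  have hone : S * Sᴴ = S * diagonal (RCLike.ofReal ∘ 1) * Sᴴ := by simp
  rw [hone, smul_mul_diagonal_mul_conjTranspose_add_smul] at hC ⊢
  have hd := (posDef_mul_diagonal_mul_conjTranspose_iff hS).1 hA
  have hc := (posDef_mul_diagonal_mul_conjTranspose_iff hS).1 hC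
  have hone_pos : ∀ i, 0 < (1 : n → ℝ) i := fun _ => one_pos
  have hconcave := Real.concaveOn_sum_log.2 (fun i _ => hd i) (fun i _ => hone_pos i) hθ0
    (sub_nonneg.2 hθ1) (add_sub_cancel θ 1)
  simp only [← RCLike.re_to_complex, log_re_det_mul_diagonal_mul_conjTranspose hS hd,
    log_re_det_mul_diagonal_mul_conjTranspose hS hc,
    log_re_det_mul_diagonal_mul_conjTranspose hS hone_pos]
  simp only [smul_eq_mul] at hconcave
  linarith
end

section
/- First-order global over-estimator of log-determinant: for all n×n complex Hermitian positive definite matrices A and B, log(det B) ≤ log(det A) + Re(tr(A⁻¹ (B − A))), with equality when B = A. -/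
/-!
With `C = A^{-1/2} B A^{-1/2}`, which is again positive definite, `log det B = log det A + log det C`
and `tr (A⁻¹ (B - A)) = tr C - n`. So the claim is `log det C ≤ tr C - n`, which is the sum of
`log λ ≤ λ - 1` over the eigenvalues `λ` of `C`.
-/

open scoped ComplexOrder MatrixOrder

namespace Matrix

variable {n 𝕜 : Type*} [Fintype n] [DecidableEq n] [RCLike 𝕜]

theorem PosDef.log_re_det_le_re_trace_sub_card {C : Matrix n n 𝕜} (hC : C.PosDef) :
    Real.log (RCLike.re C.det) ≤ RCLike.re C.trace - Fintype.card n := by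
  have hpos := hC.eigenvalues_pos
  rw [hC.1.det_eq_prod_eigenvalues, hC.1.trace_eq_sum_eigenvalues, ← RCLike.ofReal_prod,
    ← RCLike.ofReal_sum, RCLike.ofReal_re, RCLike.ofReal_re, Real.log_prod fun i _ => (hpos i).ne']
  calc ∑ i, Real.log (hC.1.eigenvalues i) ≤ ∑ i, (hC.1.eigenvalues i - 1) :=
        Finset.sum_le_sum fun i _ => Real.log_le_sub_one_of_pos (hpos i)
    _ = _ := by simp [Finset.sum_sub_distrib]

theorem PosDef.posDef_conjSqrt {A B : Matrix n n 𝕜} (hA : A.PosDef) (hB : B.PosDef) :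
    (CFC.conjSqrt A B).PosDef :=
  isStrictlyPositive_iff_posDef.1 <|
    (CFC.isStrictlyPositive_conjSqrt_iff A B hA.isStrictlyPositive).2 hB.isStrictlyPositive

theorem trace_conjSqrt {A : Matrix n n 𝕜} (hA : A.PosSemidef) (B : Matrix n n 𝕜) :
    (CFC.conjSqrt A B).trace = (A * B).trace := by
  rw [CFC.conjSqrt_apply, trace_mul_cycle, CFC.sqrt_mul_sqrt_self A hA.nonneg]

theorem det_conjSqrt {A : Matrix n n 𝕜} (hA : A.PosSemidef) (B : Matrix n n 𝕜) :
    (CFC.conjSqrt A B).det = A.det * B.det := by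
  rw [CFC.conjSqrt_apply, det_mul, det_mul, mul_right_comm, ← det_mul,
    CFC.sqrt_mul_sqrt_self A hA.nonneg]

theorem PosDef.re_det_mul {A : Matrix n n 𝕜} (hA : A.PosDef) (z : 𝕜) :
    RCLike.re (A.det * z) = RCLike.re A.det * RCLike.re z := by
  rw [RCLike.mul_re, (RCLike.pos_iff.1 hA.det_pos).2, zero_mul, sub_zero]

theorem PosDef.log_re_det_le {A B : Matrix n n 𝕜} (hA : A.PosDef) (hB : B.PosDef) :
    Real.log (RCLike.re B.det) ≤
      Real.log (RCLike.re A.det) + RCLike.re (A⁻¹ * (B - A)).trace := by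
  set C := CFC.conjSqrt A⁻¹ B
  have hC : C.PosDef := hA.inv.posDef_conjSqrt hB
  have hAdet : IsUnit A.det := hA.det_pos.ne'.isUnit
  have hdet : B.det = A.det * C.det := by
    rw [det_conjSqrt hA.inv.posSemidef, ← mul_assoc, ← det_mul, mul_nonsing_inv A hAdet,
      det_one, one_mul]
  have htrace : (A⁻¹ * (B - A)).trace = C.trace - Fintype.card n := by
    rw [trace_conjSqrt hA.inv.posSemidef, mul_sub, nonsing_inv_mul A hAdet, trace_sub, trace_one]
  calc Real.log (RCLike.re B.det)
      = Real.log (RCLike.re A.det) + Real.log (RCLike.re C.det) := by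
        rw [hdet, hA.re_det_mul, Real.log_mul (RCLike.pos_iff.1 hA.det_pos).1.ne'
          (RCLike.pos_iff.1 hC.det_pos).1.ne']
    _ ≤ Real.log (RCLike.re A.det) + (RCLike.re C.trace - Fintype.card n) := by
        gcongr
        exact hC.log_re_det_le_re_trace_sub_card
    _ = Real.log (RCLike.re A.det) + RCLike.re (A⁻¹ * (B - A)).trace := by
        rw [htrace, map_sub, RCLike.natCast_re]

end Matrix

/-- First-order global over-estimator of `log det`: for Hermitian positive definite
complex matrices `A`, `B`, `log det B ≤ log det A + Re (tr (A⁻¹ (B - A)))`,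
with equality when `B = A`. -/
theorem logdet_first_order_overestimator {n : Type*} [Fintype n] [DecidableEq n]
    (A B : Matrix n n ℂ) (hA : A.PosDef) (hB : B.PosDef) :
    Real.log B.det.re ≤ Real.log A.det.re + ((A⁻¹ * (B - A)).trace).re ∧
    (B = A →
      Real.log B.det.re = Real.log A.det.re + ((A⁻¹ * (B - A)).trace).re) :=
  ⟨hA.log_re_det_le hB, fun hBA => by simp [hBA]⟩
end

section
/- Global under-estimation of the true rates by the SIN convexified rates: fix i, k ∈ {1,…,K}, matrices M_{ik} ∈ ℂ^{N_i×m_k}, reference Hermitian PSD matrices Q̄_k ∈ ℂ^{m_k×m_k}, and define for each i the matrix Y_i = I_{N_i} + Σ_{k≠i} M_{ik} Q̄_k M_{ik}ᴴ (Hermitian positive definite). Then for every tuple of Hermitian PSD matrices Q_k ∈ ℂ^{m_k×m_k} and every i: log(det(I + Σ_k M_{ik} Q_k M_{ik}ᴴ)) − Σ_{k≠i} Re(tr(Y_i⁻¹ M_{ik} Q_k M_{ik}ᴴ)) − log(det Y_i) + Σ_{k≠i} Re(tr(Y_i⁻¹ M_{ik} Q̄_k M_{ik}ᴴ)) ≤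 log(det(I + Σ_k M_{ik} Q_k M_{ik}ᴴ)) − log(det(I + Σ_{k≠i} M_{ik} Q_k M_{ik}ᴴ)), with equality when Q_k = Q̄_k for all k. -/
open Matrix
open scoped ComplexOrder

/-!
With `A(Q) = I + ∑_{k ≠ i} M_{ik} Q_k M_{ik}ᴴ`, the interference term `log det A(Q)` is concave
in `Q`, and the SIN rate replaces it by its tangent plane at `Q̄`, where `A(Q̄) = Y_i`. Since
`∑_{k ≠ i} tr (Y_i⁻¹ M_{ik} Q̄_k M_{ik}ᴴ) = tr (Y_i⁻¹ (Y_i - I))`, the claim is the tangent-plane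
inequality `log det A ≤ log det Y + tr (Y⁻¹ A) - n`. Conjugating by `Y^{-1/2}` reduces it to
`Y = I`, where it reads `∑ log λ ≤ ∑ (λ - 1)` over the eigenvalues of the positive definite
matrix `Y^{-1/2} A Y^{-1/2}`.
-/

namespace Matrix

lemma trace_mul_one_add_sum {n ι R : Type*} [Fintype n] [DecidableEq n] [Semiring R]
    (B : Matrix n n R) (s : Finset ι) (f : ι → Matrix n n R) :
    (B * (1 + ∑ k ∈ s, f k)).trace = B.trace + ∑ k ∈ s, (B * f k).trace := by
  rw [mul_add, mul_one, trace_add, Finset.mul_sum, trace_sum]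

variable {𝕜 n : Type*} [RCLike 𝕜] [Fintype n] [DecidableEq n]

lemma posDef_one_add_sum_mul_mul_conjTranspose {ι : Type*} {m : ι → Type*}
    [∀ k, Fintype (m k)] (s : Finset ι) (M : ∀ k, Matrix n (m k) 𝕜)
    (Q : ∀ k, Matrix (m k) (m k) 𝕜) (hQ : ∀ k ∈ s, (Q k).PosSemidef) :
    (1 + ∑ k ∈ s, M k * Q k * (M k)ᴴ).PosDef :=
  PosDef.one.add_posSemidef <|
    posSemidef_sum s fun k hk => (hQ k hk).mul_mul_conjTranspose_same (M k)

lemma PosDef.ofReal_re_det {A : Matrix n n 𝕜} (hA : A.PosDef) :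
    ((RCLike.re A.det : ℝ) : 𝕜) = A.det := by
  obtain ⟨x, -, hx⟩ := RCLike.pos_iff_exists_ofReal.mp hA.det_pos
  rw [← hx, RCLike.ofReal_re]

lemma PosDef.re_det_pos {A : Matrix n n 𝕜} (hA : A.PosDef) : 0 < RCLike.re A.det :=
  (RCLike.pos_iff.mp hA.det_pos).1

lemma PosDef.log_re_det_le_re_trace_sub_card_s10 {B : Matrix n n 𝕜} (hB : B.PosDef) :
    Real.log (RCLike.re B.det) ≤ RCLike.re B.trace - Fintype.card n := by
  set ev := hB.isHermitian.eigenvalues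
  have hdet : RCLike.re B.det = ∏ i, ev i := by
    rw [hB.isHermitian.det_eq_prod_eigenvalues, ← RCLike.ofReal_prod, RCLike.ofReal_re]
  have htrace : RCLike.re B.trace = ∑ i, ev i := by
    rw [hB.isHermitian.trace_eq_sum_eigenvalues, ← RCLike.ofReal_sum, RCLike.ofReal_re]
  calc Real.log (RCLike.re B.det) = ∑ i, Real.log (ev i) := by
        rw [hdet, Real.log_prod fun i _ => (hB.eigenvalues_pos i).ne']
    _ ≤ ∑ i, (ev i - 1) :=
        Finset.sum_le_sum fun i _ => Real.log_le_sub_one_of_pos (hB.eigenvalues_pos i)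
    _ = RCLike.re B.trace - Fintype.card n := by
        simp [htrace, Finset.sum_sub_distrib]

open scoped MatrixOrder in
lemma PosDef.log_re_det_le_log_re_det_add_re_trace_inv_mul_sub_card {A Y : Matrix n n 𝕜}
    (hA : A.PosDef) (hY : Y.PosDef) :
    Real.log (RCLike.re A.det) ≤
      Real.log (RCLike.re Y.det) + RCLike.re (Y⁻¹ * A).trace - Fintype.card n := by
  set T := CFC.sqrt Y⁻¹
  have hTT : T * T = Y⁻¹ := CFC.sqrt_mul_sqrt_self _ hY.inv.posSemidef.nonneg
  have hT : Tᴴ = T := (CFC.sqrt_nonneg Y⁻¹).posSemidef.isHermitian.eq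
  have hTunit : IsUnit T := (CFC.isUnit_sqrt_iff _ hY.inv.posSemidef.nonneg).mpr hY.inv.isUnit
  have hB : (T * A * T).PosDef := by
    simpa only [hT] using hA.conjTranspose_mul_mul_same (mulVec_injective_of_isUnit hTunit)
  have hdet : (T * A * T).det = ((RCLike.re A.det / RCLike.re Y.det : ℝ) : 𝕜) := by
    rw [RCLike.ofReal_div, hA.ofReal_re_det, hY.ofReal_re_det, det_mul, det_mul, mul_right_comm,
      ← det_mul, hTT, det_nonsing_inv, Ring.inverse_eq_inv, div_eq_inv_mul]
  have htrace : (T * A * T).trace = (Y⁻¹ * A).trace := by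
    rw [trace_mul_cycle, hTT]
  have hB_bound := hB.log_re_det_le_re_trace_sub_card_s10
  rw [hdet, RCLike.ofReal_re, htrace, Real.log_div hA.re_det_pos.ne' hY.re_det_pos.ne']
    at hB_bound
  linarith

end Matrix

theorem sin_rate_global_underestimator_general {K : ℕ}
    (N m : Fin K → Type*) [∀ i, Fintype (N i)] [∀ i, DecidableEq (N i)]
    [∀ k, Fintype (m k)]
    (M : ∀ i k : Fin K, Matrix (N i) (m k) ℂ)
    (Qbar : ∀ k : Fin K, Matrix (m k) (m k) ℂ)
    (hQbar : ∀ k, (Qbar k).PosSemidef)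
    (Y : ∀ i : Fin K, Matrix (N i) (N i) ℂ)
    (hY : ∀ i, Y i = 1 + ∑ k ∈ Finset.univ.erase i, M i k * Qbar k * (M i k)ᴴ) :
    (∀ i, (Y i).PosDef) ∧
    (∀ (Q : ∀ k : Fin K, Matrix (m k) (m k) ℂ), (∀ k, (Q k).PosSemidef) →
      ∀ i : Fin K,
        Real.log ((1 + ∑ k, M i k * Q k * (M i k)ᴴ).det.re) -
            (∑ k ∈ Finset.univ.erase i, (((Y i)⁻¹ * (M i k * Q k * (M i k)ᴴ)).trace).re) -
            Real.log ((Y i).det.re) +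
            (∑ k ∈ Finset.univ.erase i, (((Y i)⁻¹ * (M i k * Qbar k * (M i k)ᴴ)).trace).re) ≤
          Real.log ((1 + ∑ k, M i k * Q k * (M i k)ᴴ).det.re) -
            Real.log ((1 + ∑ k ∈ Finset.univ.erase i, M i k * Q k * (M i k)ᴴ).det.re)) ∧
    (∀ i : Fin K,
      Real.log ((1 + ∑ k, M i k * Qbar k * (M i k)ᴴ).det.re) -
          (∑ k ∈ Finset.univ.erase i, (((Y i)⁻¹ * (M i k * Qbar k * (M i k)ᴴ)).trace).re) -
          Real.log ((Y i).det.re) +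
          (∑ k ∈ Finset.univ.erase i, (((Y i)⁻¹ * (M i k * Qbar k * (M i k)ᴴ)).trace).re) =
        Real.log ((1 + ∑ k, M i k * Qbar k * (M i k)ᴴ).det.re) -
          Real.log ((1 + ∑ k ∈ Finset.univ.erase i, M i k * Qbar k * (M i k)ᴴ).det.re)) := by
  have hpd : ∀ Q : ∀ k : Fin K, Matrix (m k) (m k) ℂ, (∀ k, (Q k).PosSemidef) → ∀ i,
      (1 + ∑ k ∈ Finset.univ.erase i, M i k * Q k * (M i k)ᴴ).PosDef :=
    fun Q hQ i => posDef_one_add_sum_mul_mul_conjTranspose _ _ _ fun k _ => hQ k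
  have hYpd : ∀ i, (Y i).PosDef := fun i => hY i ▸ hpd Qbar hQbar i
  refine ⟨hYpd, fun Q hQ i => ?_, fun i => by rw [← hY i]; ring⟩
  have hlogdet := (hpd Q hQ i).log_re_det_le_log_re_det_add_re_trace_inv_mul_sub_card (hYpd i)
  have htrace := congrArg Complex.re <|
    (Y i)⁻¹.trace_mul_one_add_sum (Finset.univ.erase i) fun k => M i k * Q k * (M i k)ᴴ
  have htrace_bar := congrArg Complex.re <|
    (Y i)⁻¹.trace_mul_one_add_sum (Finset.univ.erase i) fun k => M i k * Qbar k * (M i k)ᴴ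
  rw [← hY i, nonsing_inv_mul _ ((isUnit_iff_isUnit_det _).mp (hYpd i).isUnit), trace_one]
    at htrace_bar
  simp only [RCLike.re_to_complex, Complex.add_re, Complex.re_sum, Complex.natCast_re]
    at hlogdet htrace htrace_bar
  linarith

/-- Global under-estimation of the true rates by the SIN convexified rates:
with reference Hermitian PSD covariances `Q̄ k` and
`Y i = I + ∑_{k ≠ i} M i k (Q̄ k) (M i k)ᴴ` (Hermitian positive definite), for every
tuple of Hermitian PSD covariances `Q k` and every user `i`, the SIN convexified rate
is at most the true rate, with equality when `Q = Q̄`. -/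
theorem sin_rate_global_underestimator {K : ℕ}
    (N m : Fin K → Type*) [∀ i, Fintype (N i)] [∀ i, DecidableEq (N i)]
    [∀ k, Fintype (m k)] [∀ k, DecidableEq (m k)]
    (M : ∀ i k : Fin K, Matrix (N i) (m k) ℂ)
    (Qbar : ∀ k : Fin K, Matrix (m k) (m k) ℂ)
    (hQbar : ∀ k, (Qbar k).PosSemidef)
    (Y : ∀ i : Fin K, Matrix (N i) (N i) ℂ)
    (hY : ∀ i, Y i = 1 + ∑ k ∈ Finset.univ.erase i, M i k * Qbar k * (M i k)ᴴ) :
    (∀ i, (Y i).PosDef) ∧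
    (∀ (Q : ∀ k : Fin K, Matrix (m k) (m k) ℂ), (∀ k, (Q k).PosSemidef) →
      ∀ i : Fin K,
        Real.log ((1 + ∑ k, M i k * Q k * (M i k)ᴴ).det.re) -
            (∑ k ∈ Finset.univ.erase i, (((Y i)⁻¹ * (M i k * Q k * (M i k)ᴴ)).trace).re) -
            Real.log ((Y i).det.re) +
            (∑ k ∈ Finset.univ.erase i, (((Y i)⁻¹ * (M i k * Qbar k * (M i k)ᴴ)).trace).re) ≤
          Real.log ((1 + ∑ k, M i k * Q k * (M i k)ᴴ).det.re) -
            Real.log ((1 + ∑ k ∈ Finset.univ.erase i, M i k * Q k * (M i k)ᴴ).det.re)) ∧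
    (∀ i : Fin K,
      Real.log ((1 + ∑ k, M i k * Qbar k * (M i k)ᴴ).det.re) -
          (∑ k ∈ Finset.univ.erase i, (((Y i)⁻¹ * (M i k * Qbar k * (M i k)ᴴ)).trace).re) -
          Real.log ((Y i).det.re) +
          (∑ k ∈ Finset.univ.erase i, (((Y i)⁻¹ * (M i k * Qbar k * (M i k)ᴴ)).trace).re) =
        Real.log ((1 + ∑ k, M i k * Qbar k * (M i k)ᴴ).det.re) -
          Real.log ((1 + ∑ k ∈ Finset.univ.erase i, M i k * Qbar k * (M i k)ᴴ).det.re)) :=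
  sin_rate_global_underestimator_general N m M Qbar hQbar Y hY
end

section
/- Proposition 1 (SIN outperforms any interference-free linear precoder): fix i, k ∈ {1,…,K}, effective channel matrices M_{ik} ∈ ℂ^{N_i×m_k}, power-constraint matrices A_{jk} ∈ ℂ^{m_k×m_k} for j ∈ {1,…,B}, and budgets P_j ≥ 0. Call a tuple Q = (Q_k) feasible if each Q_k is Hermitian positive semidefinite and Σ_k Re(tr(A_{jk} Q_k A_{jk}ᴴ)) ≤ P_j for every j. Define the true rate R_i(Q) = log(det(I + Σ_k M_{ik} Q_k M_{ik}ᴴ)) − log(det(I + Σ_{k≠i} M_{ik} Q_k M_{ik}ᴴ)) and the convexified rate R̃_i(Q) = log(det(I + Σ_k M_{ik} Q_k M_{ik}ᴴ)) − Σ_{k≠i} Re(tr(M_{ik} Q_k M_{ik}ᴴ)). Let U : ℝ^K → ℝ be nondecreasing with respect to the componentwise order. Suppose Q* is feasible and maximizes U(R̃(·)) over all feasible tuples. Then for every feasible tuple Q̂ satisfying the interference-free condition Σ_{k≠i} M_{ik} Q̂_k M_{ik}ᴴ = 0 for all i, one has U(R(Q*)) ≥ U(R(Q̂)). -/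
open Matrix
open scoped ComplexOrder

namespace Matrix

variable {𝕜 n : Type*} [RCLike 𝕜] [Fintype n] [DecidableEq n]

/-- The matrix form of `log x ≤ x - 1`, applied to the eigenvalues of `1 + J`. -/
theorem PosSemidef.log_re_det_one_add_le_re_trace {J : Matrix n n 𝕜} (hJ : J.PosSemidef) :
    Real.log (RCLike.re (1 + J).det) ≤ RCLike.re J.trace := by
  have hH : (1 + J).PosDef := PosDef.one.add_posSemidef hJ
  have hdet : RCLike.re (1 + J).det = ∏ i, hH.isHermitian.eigenvalues i := by
    rw [hH.isHermitian.det_eq_prod_eigenvalues, ← RCLike.ofReal_prod, RCLike.ofReal_re]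
  have htrace : RCLike.re J.trace = ∑ i, (hH.isHermitian.eigenvalues i - 1) := by
    have hsum := congrArg RCLike.re hH.isHermitian.trace_eq_sum_eigenvalues
    simp only [trace_add, trace_one, map_add, map_sum, RCLike.ofReal_re] at hsum
    rw [Finset.sum_sub_distrib, ← hsum]
    simp
  calc Real.log (RCLike.re (1 + J).det)
      = ∑ i, Real.log (hH.isHermitian.eigenvalues i) := by
        rw [hdet, Real.log_prod fun i _ => (hH.eigenvalues_pos i).ne']
    _ ≤ ∑ i, (hH.isHermitian.eigenvalues i - 1) :=
        Finset.sum_le_sum fun i _ => Real.log_le_sub_one_of_pos (hH.eigenvalues_pos i)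
    _ = RCLike.re J.trace := htrace.symm

theorem log_re_det_one_add_sum_le_sum_re_trace {ι : Type*} {s : Finset ι}
    {X : ι → Matrix n n 𝕜} (hX : ∀ k ∈ s, (X k).PosSemidef) :
    Real.log (RCLike.re (1 + ∑ k ∈ s, X k).det) ≤ ∑ k ∈ s, RCLike.re (X k).trace := by
  simpa only [trace_sum, map_sum] using
    (posSemidef_sum s hX).log_re_det_one_add_le_re_trace

end Matrix

theorem sin_outperforms_interference_free_general {K B : ℕ}
    (N m : Fin K → Type*) [∀ i, Fintype (N i)] [∀ i, DecidableEq (N i)]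
    [∀ k, Fintype (m k)]
    (M : ∀ i k : Fin K, Matrix (N i) (m k) ℂ)
    (A : ∀ (_ : Fin B) (k : Fin K), Matrix (m k) (m k) ℂ)
    (P : Fin B → ℝ)
    (U : (Fin K → ℝ) → ℝ) (hU : Monotone U)
    (feasible : (∀ k : Fin K, Matrix (m k) (m k) ℂ) → Prop)
    (hfeasible : ∀ Q, feasible Q ↔
      (∀ k, (Q k).PosSemidef) ∧
      ∀ j : Fin B, ∑ k, ((A j k * Q k * (A j k)ᴴ).trace).re ≤ P j)
    (R Rt : (∀ k : Fin K, Matrix (m k) (m k) ℂ) → Fin K → ℝ)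
    (hR : ∀ Q i, R Q i =
      Real.log ((1 + ∑ k, M i k * Q k * (M i k)ᴴ).det.re) -
        Real.log ((1 + ∑ k ∈ Finset.univ.erase i, M i k * Q k * (M i k)ᴴ).det.re))
    (hRt : ∀ Q i, Rt Q i =
      Real.log ((1 + ∑ k, M i k * Q k * (M i k)ᴴ).det.re) -
        ∑ k ∈ Finset.univ.erase i, ((M i k * Q k * (M i k)ᴴ).trace).re)
    (Qstar : ∀ k : Fin K, Matrix (m k) (m k) ℂ)
    (hQstar : feasible Qstar)
    (hmax : ∀ Q, feasible Q → U (Rt Q) ≤ U (Rt Qstar))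
    (Qhat : ∀ k : Fin K, Matrix (m k) (m k) ℂ)
    (hQhat : feasible Qhat)
    (hfree : ∀ i, ∑ k ∈ Finset.univ.erase i, M i k * Qhat k * (M i k)ᴴ = 0) :
    U (R Qhat) ≤ U (R Qstar) := by
  have hQstar_psd := ((hfeasible Qstar).mp hQstar).1
  have hrate_eq : R Qhat = Rt Qhat := funext fun i => by
    rw [hR, hRt, ← Complex.re_sum, ← trace_sum, hfree i]
    simp
  have hrate_le : Rt Qstar ≤ R Qstar := fun i => by
    have hinterference := log_re_det_one_add_sum_le_sum_re_trace (s := Finset.univ.erase i)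
      fun k _ => (hQstar_psd k).mul_mul_conjTranspose_same (M i k)
    simp only [RCLike.re_to_complex] at hinterference
    rw [hR, hRt]
    linarith
  calc U (R Qhat) = U (Rt Qhat) := by rw [hrate_eq]
    _ ≤ U (Rt Qstar) := hmax Qhat hQhat
    _ ≤ U (R Qstar) := hU hrate_le

/-- Proposition 1 (SIN outperforms any interference-free linear precoder):
`feasible` tuples are Hermitian PSD covariances meeting the per-base power
constraints; `R` is the true rate and `Rt` the SIN convexified rate of the initial
iteration (reference `Q̄ = 0`, so `Y i = I`). If `U` is nondecreasing (componentwise)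
and `Q*` is a feasible maximizer of `U ∘ Rt` over feasible tuples, then for every
feasible interference-free tuple `Q̂`, `U (R Q*) ≥ U (R Q̂)`. -/
theorem sin_outperforms_interference_free {K B : ℕ}
    (N m : Fin K → Type*) [∀ i, Fintype (N i)] [∀ i, DecidableEq (N i)]
    [∀ k, Fintype (m k)] [∀ k, DecidableEq (m k)]
    (M : ∀ i k : Fin K, Matrix (N i) (m k) ℂ)
    (A : ∀ (_ : Fin B) (k : Fin K), Matrix (m k) (m k) ℂ)
    (P : Fin B → ℝ) (hP : ∀ j, 0 ≤ P j)
    (U : (Fin K → ℝ) → ℝ) (hU : Monotone U)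
    (feasible : (∀ k : Fin K, Matrix (m k) (m k) ℂ) → Prop)
    (hfeasible : ∀ Q, feasible Q ↔
      (∀ k, (Q k).PosSemidef) ∧
      ∀ j : Fin B, ∑ k, ((A j k * Q k * (A j k)ᴴ).trace).re ≤ P j)
    (R Rt : (∀ k : Fin K, Matrix (m k) (m k) ℂ) → Fin K → ℝ)
    (hR : ∀ Q i, R Q i =
      Real.log ((1 + ∑ k, M i k * Q k * (M i k)ᴴ).det.re) -
        Real.log ((1 + ∑ k ∈ Finset.univ.erase i, M i k * Q k * (M i k)ᴴ).det.re))
    (hRt : ∀ Q i, Rt Q i =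
      Real.log ((1 + ∑ k, M i k * Q k * (M i k)ᴴ).det.re) -
        ∑ k ∈ Finset.univ.erase i, ((M i k * Q k * (M i k)ᴴ).trace).re)
    (Qstar : ∀ k : Fin K, Matrix (m k) (m k) ℂ)
    (hQstar : feasible Qstar)
    (hmax : ∀ Q, feasible Q → U (Rt Q) ≤ U (Rt Qstar))
    (Qhat : ∀ k : Fin K, Matrix (m k) (m k) ℂ)
    (hQhat : feasible Qhat)
    (hfree : ∀ i, ∑ k ∈ Finset.univ.erase i, M i k * Qhat k * (M i k)ᴴ = 0) :
    U (R Qhat) ≤ U (R Qstar) :=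
  sin_outperforms_interference_free_general N m M A P U hU feasible hfeasible R Rt hR hRt Qstar
    hQstar hmax Qhat hQhat hfree
end

section
/- Monotone improvement of the SIN iteration: fix i, k ∈ {1,…,K}, effective channel matrices M_{ik} ∈ ℂ^{N_i×m_k}, power-constraint matrices A_{jk} ∈ ℂ^{m_k×m_k} and budgets P_j ≥ 0, with feasibility of a tuple Q = (Q_k) meaning each Q_k is Hermitian PSD and Σ_k Re(tr(A_{jk} Q_k A_{jk}ᴴ)) ≤ P_j for every j. Let Q̄ be feasible, set Y_i = I + Σ_{k≠i} M_{ik} Q̄_k M_{ik}ᴴ, and define R̃_i(Q) = log(det(I + Σ_k M_{ik} Q_k M_{ik}ᴴ)) − Σ_{k≠i} Re(tr(Y_i⁻¹ M_{ik} Q_k M_{ik}ᴴ)) − log(det Y_i) + Σ_{k≠i} Re(tr(Y_i⁻¹ M_{ik} Q̄_k M_{ik}ᴴ)), and the true rate R_i(Q) = log(det(I + Σ_k M_{ik} Q_k M_{ik}ᴴ)) − log(det(I + Σ_{k≠i} M_{ik} Q_k M_{ik}ᴴ)). Let U : ℝ^K → ℝ be nondecreasing with respect to the componentwise order. If Q*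 is feasible and maximizes U(R̃(·)) over all feasible tuples, then U(R(Q*)) ≥ U(R(Q̄)); i.e., the true utility is nondecreasing from one SIN iteration to the next. -/
/-!
`log det` is concave on positive definite matrices, so it lies below its tangent plane:
`log det X ≤ log det Y + Re tr (Y⁻¹ (X - Y))`. Applied to the interference-plus-noise matrix
at `Q̄`, this says that the convexified rate `R̃ᵢ` is a global under-estimator of the true rate
`Rᵢ`, touching it at `Q̄`. Hence `U (R Q̄) = U (R̃ Q̄) ≤ U (R̃ Q*) ≤ U (R Q*)`, by maximality of
`Q*` and monotonicity of `U`.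
-/

open Matrix
open scoped ComplexOrder MatrixOrder

namespace Matrix

variable {n : Type*} [Fintype n] [DecidableEq n]

lemma PosDef.log_re_det_mul {A B : Matrix n n ℂ} (hA : A.PosDef) (hB : B.PosDef) :
    Real.log (A * B).det.re = Real.log A.det.re + Real.log B.det.re := by
  obtain ⟨hA_re, hA_im⟩ := Complex.pos_iff.mp hA.det_pos
  obtain ⟨hB_re, -⟩ := Complex.pos_iff.mp hB.det_pos
  rw [det_mul, Complex.mul_re, ← hA_im, zero_mul, sub_zero, Real.log_mul hA_re.ne' hB_re.ne']

/-- On eigenvalues this is `log μ ≤ μ - 1`. -/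
lemma PosDef.log_re_det_le_re_trace_sub_card_s12 {A : Matrix n n ℂ} (hA : A.PosDef) :
    Real.log A.det.re ≤ A.trace.re - Fintype.card n := by
  rw [hA.1.det_eq_prod_eigenvalues, hA.1.trace_eq_sum_eigenvalues]
  set μ := hA.1.eigenvalues
  have hμ : ∀ i, 0 < μ i := hA.eigenvalues_pos
  simp only [← RCLike.ofReal_prod, ← RCLike.ofReal_sum]
  change Real.log ((∏ i, μ i : ℝ) : ℂ).re ≤ ((∑ i, μ i : ℝ) : ℂ).re - _
  rw [Complex.ofReal_re, Complex.ofReal_re, Real.log_prod fun i _ => (hμ i).ne']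
  calc ∑ i, Real.log (μ i) ≤ ∑ i, (μ i - 1) :=
        Finset.sum_le_sum fun i _ => Real.log_le_sub_one_of_pos (hμ i)
    _ = _ := by simp [Finset.sum_sub_distrib]

/-- Reduced to the case `Y = 1` by the congruence `X ↦ S X S` with `S = √(Y⁻¹)`. -/
lemma PosDef.log_re_det_le_tangent {X Y : Matrix n n ℂ} (hX : X.PosDef) (hY : Y.PosDef) :
    Real.log X.det.re ≤ Real.log Y.det.re + (Y⁻¹ * (X - Y)).trace.re := by
  have hY_det : IsUnit Y.det := (isUnit_iff_isUnit_det Y).mp hY.isUnit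
  set S := CFC.sqrt Y⁻¹
  have hSS : S * S = Y⁻¹ := CFC.sqrt_mul_sqrt_self _ hY.inv.posSemidef.nonneg
  have hS_star : star S = S := (CFC.sqrt_nonneg Y⁻¹).posSemidef.isHermitian
  have hS_unit : IsUnit S := by
    refine (isUnit_iff_isUnit_det S).mpr (isUnit_of_mul_isUnit_left (y := S.det) ?_)
    rw [← det_mul, hSS]
    exact (isUnit_iff_isUnit_det _).mp hY.inv.isUnit
  have hZ : (S * X * S).PosDef := by
    simpa only [hS_star] using (IsUnit.posDef_star_right_conjugate_iff hS_unit).mpr hX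
  have hdet : (Y * (S * X * S)).det = X.det := calc
    _ = (Y * (S * S)).det * X.det := by simp only [det_mul]; ring
    _ = X.det := by rw [hSS, mul_nonsing_inv _ hY_det, det_one, one_mul]
  have htrace : (Y⁻¹ * (X - Y)).trace = (S * X * S).trace - Fintype.card n := by
    rw [trace_mul_cycle, hSS, mul_sub, nonsing_inv_mul _ hY_det, trace_sub, trace_one]
  have hZ_bound := hZ.log_re_det_le_re_trace_sub_card_s12
  rw [← hdet, hY.log_re_det_mul hZ, htrace, Complex.sub_re, Complex.natCast_re]
  linarith

lemma log_re_det_one_add_sum_le {ι : Type*} (s : Finset ι) {T T₀ : ι → Matrix n n ℂ}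
    (hT : ∀ k ∈ s, (T k).PosSemidef) (hT₀ : ∀ k ∈ s, (T₀ k).PosSemidef) :
    Real.log (1 + ∑ k ∈ s, T k).det.re ≤
      Real.log (1 + ∑ k ∈ s, T₀ k).det.re +
        ∑ k ∈ s, ((1 + ∑ k ∈ s, T₀ k)⁻¹ * T k).trace.re -
        ∑ k ∈ s, ((1 + ∑ k ∈ s, T₀ k)⁻¹ * T₀ k).trace.re := by
  have h := (PosDef.one.add_posSemidef (posSemidef_sum s hT)).log_re_det_le_tangent
    (PosDef.one.add_posSemidef (posSemidef_sum s hT₀))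
  rwa [add_sub_add_left_eq_sub, mul_sub, trace_sub, Complex.sub_re, Finset.mul_sum,
    Finset.mul_sum, trace_sum, trace_sum, Complex.re_sum, Complex.re_sum, ← add_sub_assoc] at h

end Matrix

theorem sin_iteration_monotone_improvement_general {K B : ℕ}
    (N m : Fin K → Type*) [∀ i, Fintype (N i)] [∀ i, DecidableEq (N i)]
    [∀ k, Fintype (m k)] [∀ k, DecidableEq (m k)]
    (M : ∀ i k : Fin K, Matrix (N i) (m k) ℂ)
    (A : ∀ (_ : Fin B) (k : Fin K), Matrix (m k) (m k) ℂ)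
    (P : Fin B → ℝ)
    (U : (Fin K → ℝ) → ℝ) (hU : Monotone U)
    (feasible : (∀ k : Fin K, Matrix (m k) (m k) ℂ) → Prop)
    (hfeasible : ∀ Q, feasible Q ↔
      (∀ k, (Q k).PosSemidef) ∧
      ∀ j : Fin B, ∑ k, ((A j k * Q k * (A j k)ᴴ).trace).re ≤ P j)
    (Qbar : ∀ k : Fin K, Matrix (m k) (m k) ℂ)
    (hQbar : feasible Qbar)
    (Y : ∀ i : Fin K, Matrix (N i) (N i) ℂ)
    (hY : ∀ i, Y i = 1 + ∑ k ∈ Finset.univ.erase i, M i k * Qbar k * (M i k)ᴴ)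
    (R Rt : (∀ k : Fin K, Matrix (m k) (m k) ℂ) → Fin K → ℝ)
    (hR : ∀ Q i, R Q i =
      Real.log ((1 + ∑ k, M i k * Q k * (M i k)ᴴ).det.re) -
        Real.log ((1 + ∑ k ∈ Finset.univ.erase i, M i k * Q k * (M i k)ᴴ).det.re))
    (hRt : ∀ Q i, Rt Q i =
      Real.log ((1 + ∑ k, M i k * Q k * (M i k)ᴴ).det.re) -
        (∑ k ∈ Finset.univ.erase i, (((Y i)⁻¹ * (M i k * Q k * (M i k)ᴴ)).trace).re) -
        Real.log ((Y i).det.re) +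
        (∑ k ∈ Finset.univ.erase i, (((Y i)⁻¹ * (M i k * Qbar k * (M i k)ᴴ)).trace).re))
    (Qstar : ∀ k : Fin K, Matrix (m k) (m k) ℂ)
    (hQstar : feasible Qstar)
    (hmax : ∀ Q, feasible Q → U (Rt Q) ≤ U (Rt Qstar)) :
    U (R Qbar) ≤ U (R Qstar) := by
  have hpsd : ∀ Q, feasible Q → ∀ i k, (M i k * Q k * (M i k)ᴴ).PosSemidef :=
    fun Q hQ i k => (((hfeasible Q).mp hQ).1 k).mul_mul_conjTranspose_same _
  have hRt_eq : Rt Qbar = R Qbar := funext fun i => by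
    rw [hRt, hR, ← hY]
    ring
  have hRt_le : Rt Qstar ≤ R Qstar := fun i => by
    have h := log_re_det_one_add_sum_le (Finset.univ.erase i)
      (fun k _ => hpsd Qstar hQstar i k) (fun k _ => hpsd Qbar hQbar i k)
    rw [hRt, hR, hY]
    linarith
  calc U (R Qbar) = U (Rt Qbar) := by rw [hRt_eq]
    _ ≤ U (Rt Qstar) := hmax Qbar hQbar
    _ ≤ U (R Qstar) := hU hRt_le

/-- Monotone improvement of the SIN iteration: with `Q̄` feasible,
`Y i = I + ∑_{k ≠ i} M i k (Q̄ k) (M i k)ᴴ`, `Rt` the SIN convexified rate obtained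
by linearizing the interference log-determinant around `Q̄`, and `R` the true rate,
if `U` is nondecreasing (componentwise) and `Q*` is a feasible maximizer of
`U ∘ Rt` over feasible tuples, then `U (R Q*) ≥ U (R Q̄)`. -/
theorem sin_iteration_monotone_improvement {K B : ℕ}
    (N m : Fin K → Type*) [∀ i, Fintype (N i)] [∀ i, DecidableEq (N i)]
    [∀ k, Fintype (m k)] [∀ k, DecidableEq (m k)]
    (M : ∀ i k : Fin K, Matrix (N i) (m k) ℂ)
    (A : ∀ (_ : Fin B) (k : Fin K), Matrix (m k) (m k) ℂ)
    (P : Fin B → ℝ) (hP : ∀ j, 0 ≤ P j)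
    (U : (Fin K → ℝ) → ℝ) (hU : Monotone U)
    (feasible : (∀ k : Fin K, Matrix (m k) (m k) ℂ) → Prop)
    (hfeasible : ∀ Q, feasible Q ↔
      (∀ k, (Q k).PosSemidef) ∧
      ∀ j : Fin B, ∑ k, ((A j k * Q k * (A j k)ᴴ).trace).re ≤ P j)
    (Qbar : ∀ k : Fin K, Matrix (m k) (m k) ℂ)
    (hQbar : feasible Qbar)
    (Y : ∀ i : Fin K, Matrix (N i) (N i) ℂ)
    (hY : ∀ i, Y i = 1 + ∑ k ∈ Finset.univ.erase i, M i k * Qbar k * (M i k)ᴴ)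
    (R Rt : (∀ k : Fin K, Matrix (m k) (m k) ℂ) → Fin K → ℝ)
    (hR : ∀ Q i, R Q i =
      Real.log ((1 + ∑ k, M i k * Q k * (M i k)ᴴ).det.re) -
        Real.log ((1 + ∑ k ∈ Finset.univ.erase i, M i k * Q k * (M i k)ᴴ).det.re))
    (hRt : ∀ Q i, Rt Q i =
      Real.log ((1 + ∑ k, M i k * Q k * (M i k)ᴴ).det.re) -
        (∑ k ∈ Finset.univ.erase i, (((Y i)⁻¹ * (M i k * Q k * (M i k)ᴴ)).trace).re) -
        Real.log ((Y i).det.re) +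
        (∑ k ∈ Finset.univ.erase i, (((Y i)⁻¹ * (M i k * Qbar k * (M i k)ᴴ)).trace).re))
    (Qstar : ∀ k : Fin K, Matrix (m k) (m k) ℂ)
    (hQstar : feasible Qstar)
    (hmax : ∀ Q, feasible Q → U (Rt Q) ≤ U (Rt Qstar)) :
    U (R Qbar) ≤ U (R Qstar) :=
  sin_iteration_monotone_improvement_general N m M A P U hU feasible hfeasible Qbar hQbar Y hY R Rt
    hR hRt Qstar hQstar hmax
end
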